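/- arXiv:1410.6046 — 2 statements merged into one kernel-verified Lean document; each statement's English description precedes it below -/
import Mathlib

section
/- Let a = (1,0,0,0,...). Then σ ≤_a τ in the quasi-consecutive pattern poset if and only if there is an occurrence of σ in τ (a subsequence order-isomorphic to σ) in which all entries are adjacent in τ except possibly the first and the second. -/
open scoped Classical

/-- A finite permutation of arbitrary length: a length `n` together with a
permutation of `Fin n` (in one-line notation, the entry at position `i` is
its value at `i`). -/
abbrev QPerm : Type := Σ n : ℕ, Equiv.Perm (Fin n)

/-- `IsOcc a σ τ f` : the strictly monotone position map `f` selects an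
occurrence of the pattern `σ` in `τ` (order-isomorphically), where for every
gap index `j ≥ 1` (1-indexed) with `a j = false` the `j`-th and `(j+1)`-th
selected positions must be adjacent in `τ`. -/
def IsOcc (a : ℕ → Bool) {k n : ℕ} (σ : Equiv.Perm (Fin k)) (τ : Equiv.Perm (Fin n))
    (f : Fin k → Fin n) : Prop :=
  StrictMono f ∧ (∀ i j : Fin k, σ i < σ j ↔ τ (f i) < τ (f j)) ∧
    ∀ (i : ℕ) (h : i + 1 < k), a (i + 1) = false →
      (f ⟨i + 1, h⟩ : ℕ) = (f ⟨i, Nat.lt_of_succ_lt h⟩ : ℕ) + 1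

/-- `σ` occurs in `τ` as an `a`-vincular pattern. -/
def VOcc (a : ℕ → Bool) (σ τ : QPerm) : Prop :=
  ∃ f : Fin σ.1 → Fin τ.1, IsOcc a σ.2 τ.2 f

/-- Covering relation of the `a`-vincular pattern poset. -/
def VCov (a : ℕ → Bool) (σ τ : QPerm) : Prop :=
  σ.1 + 1 = τ.1 ∧ VOcc a σ τ

/-- The `a`-vincular pattern order: reflexive-transitive closure of covering. -/
def VLe (a : ℕ → Bool) (σ τ : QPerm) : Prop :=
  Relation.ReflTransGen (VCov a) σ τ

/-- Occurrence as an `A`-vincular pattern for a matrix `A` (rows and columns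
1-indexed via `A i j`); a pattern of length `k` uses row `k - 1`. -/
def MOcc (A : ℕ → ℕ → Bool) (σ τ : QPerm) : Prop :=
  VOcc (fun j => A (σ.1 - 1) j) σ τ

/-- Covering relation of the `A`-vincular pattern poset. -/
def MCov (A : ℕ → ℕ → Bool) (σ τ : QPerm) : Prop :=
  σ.1 + 1 = τ.1 ∧ MOcc A σ τ

/-- The `A`-vincular pattern order. -/
def MLe (A : ℕ → ℕ → Bool) (σ τ : QPerm) : Prop :=
  Relation.ReflTransGen (MCov A) σ τ

/-- The quasi-consecutive adjacency vector `a = (1,0,0,…)` (1-indexed). -/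
def qa : ℕ → Bool := fun j => decide (j = 1)

/-- Quasi-consecutive pattern occurrence. -/
def QOcc (σ τ : QPerm) : Prop := VOcc qa σ τ

/-- Covering in the quasi-consecutive pattern poset. -/
def QCov (σ τ : QPerm) : Prop := VCov qa σ τ

/-- The quasi-consecutive pattern poset order. -/
def QLe (σ τ : QPerm) : Prop := VLe qa σ τ

/-- All permutations of length at most `n`, as a finset. -/
def permsUpTo (n : ℕ) : Finset QPerm :=
  (Finset.range (n + 1)).sigma fun _ => Finset.univ

/-- Möbius function of the quasi-consecutive pattern poset, computed with
fuel (the fuel `τ.1` always suffices, since lengths strictly increase along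
the order). -/
noncomputable def qMuAux : ℕ → QPerm → QPerm → ℤ
  | 0, σ, τ => if σ = τ then 1 else 0
  | m + 1, σ, τ =>
      if σ = τ then 1
      else -∑ z ∈ (permsUpTo τ.1).filter fun z => QLe σ z ∧ QLe z τ ∧ z ≠ τ,
            qMuAux m σ z

/-- The Möbius function of the quasi-consecutive pattern poset. -/
noncomputable def qMu (σ τ : QPerm) : ℤ := qMuAux τ.1 σ τ

/-- The interval `[σ, τ]` in the quasi-consecutive pattern poset. -/
def QInterval (σ τ : QPerm) : Set QPerm := {ρ | QLe σ ρ ∧ QLe ρ τ}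

/-- The interval `[σ, τ]` is a chain. -/
def QChain (σ τ : QPerm) : Prop :=
  ∀ ρ₁ ρ₂ : QPerm, ρ₁ ∈ QInterval σ τ → ρ₂ ∈ QInterval σ τ → QLe ρ₁ ρ₂ ∨ QLe ρ₂ ρ₁

/-- The interval `[σ, τ]` is order-isomorphic to the product of a chain with
`p + 1` elements and a chain with `q + 1` elements (componentwise order). -/
def IsGridInterval (σ τ : QPerm) (p q : ℕ) : Prop :=
  ∃ e : QInterval σ τ ≃ Fin (p + 1) × Fin (q + 1),
    ∀ ρ₁ ρ₂ : QInterval σ τ, QLe ρ₁.1 ρ₂.1 ↔ e ρ₁ ≤ e ρ₂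

/-- The occurrence `f` involves position `i` (0-indexed) of the big permutation. -/
def Involves {k n : ℕ} (f : Fin k → Fin n) (i : ℕ) : Prop :=
  ∃ j : Fin k, (f j : ℕ) = i

/-- The occurrence `f` is consecutive: all selected positions are adjacent. -/
def ConsecOcc {k n : ℕ} (f : Fin k → Fin n) : Prop :=
  ∀ (i : ℕ) (h : i + 1 < k),
    (f ⟨i + 1, h⟩ : ℕ) = (f ⟨i, Nat.lt_of_succ_lt h⟩ : ℕ) + 1

/-- The first two entries of `τ` are not consecutive integers. -/
def NotConsecFirstTwo (τ : QPerm) : Prop :=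
  ∀ i j : Fin τ.1, (i : ℕ) = 0 → (j : ℕ) = 1 →
    (τ.2 i : ℕ) + 1 ≠ (τ.2 j : ℕ) ∧ (τ.2 j : ℕ) + 1 ≠ (τ.2 i : ℕ)

/-- `τ` is a monotone (increasing or decreasing) permutation. -/
def IsMonotonePerm (τ : QPerm) : Prop :=
  (∀ i j : Fin τ.1, i < j → τ.2 i < τ.2 j) ∨ (∀ i j : Fin τ.1, i < j → τ.2 j < τ.2 i)

/-! A quasi-consecutive occurrence of `σ` in a longer `τ` always misses position `0`,
position `1` or the last position of `τ`: if it used the first two, its adjacency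
constraints would confine it to the initial segment of length `|σ| < |τ|`. Deleting a
missed position among these three is a covering step, since these are exactly the
positions whose removal keeps every adjacency a quasi-consecutive occurrence requires;
induction on `|τ|` gives `σ ≤ τ`. Conversely, quasi-consecutive occurrences compose,
because an occurrence sends every position `≥ 1` to a position `≥ 1`. -/

open Equiv

lemma Fin.val_le_val_apply_of_strictMono {k n : ℕ} {f : Fin k → Fin n} (hf : StrictMono f) :
    ∀ i : Fin k, (i : ℕ) ≤ f i
  | ⟨0, _⟩ => Nat.zero_le _
  | ⟨i + 1, hi⟩ => by
    have hprev := Fin.val_le_val_apply_of_strictMono hf ⟨i, by omega⟩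
    have hstep : f ⟨i, by omega⟩ < f ⟨i + 1, hi⟩ := hf (Fin.mk_lt_mk.2 i.lt_succ_self)
    exact Nat.succ_le_of_lt (hprev.trans_lt hstep)

lemma Fin.val_eq_val_add_one_of_strictMono {m n : ℕ} {g : Fin m → Fin n} (hg : StrictMono g)
    {x y : Fin m} (hxy : x < y) (h : (g y : ℕ) = g x + 1) : (y : ℕ) = x + 1 := by
  by_contra hne
  have hz : (x : ℕ) + 1 < m := by omega
  have h₁ : g x < g ⟨x + 1, hz⟩ := hg (Fin.mk_lt_mk.2 (Nat.lt_succ_self _) : x < ⟨x + 1, hz⟩)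
  have h₂ : g ⟨x + 1, hz⟩ < g y := hg (Fin.lt_def.2 (by simp only [Fin.lt_def] at hxy ⊢; omega))
  simp only [Fin.lt_def] at h₁ h₂
  omega

lemma Equiv.Perm.eq_of_lt_iff_lt {α : Type*} [LinearOrder α] [Finite α] {s t : Perm α}
    (h : ∀ i j, s i < s j ↔ t i < t j) : s = t := by
  have hmono : StrictMono (t ∘ s.symm) := fun x y hxy =>
    (h _ _).1 (by simpa using hxy)
  ext x
  simpa using (congrFun hmono.eq_id (s x)).symm

lemma qa_add_one_eq_false {i : ℕ} : qa (i + 1) = false ↔ i ≠ 0 := by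
  simp [qa]

lemma isOcc_qa_iff {k n : ℕ} {s : Perm (Fin k)} {t : Perm (Fin n)} {f : Fin k → Fin n} :
    IsOcc qa s t f ↔ StrictMono f ∧ (∀ i j, s i < s j ↔ t (f i) < t (f j)) ∧
      ∀ x y : Fin k, (x : ℕ) ≠ 0 → (y : ℕ) = x + 1 → (f y : ℕ) = f x + 1 := by
  refine and_congr_right fun _ => and_congr_right fun _ => ⟨?_, ?_⟩
  · rintro hadj ⟨x, hx⟩ ⟨y, hy⟩ hx0 (rfl : y = x + 1)
    exact hadj x hy (qa_add_one_eq_false.2 hx0)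
  · intro hadj i hi hqa
    exact hadj ⟨i, _⟩ ⟨i + 1, hi⟩ (qa_add_one_eq_false.1 hqa) rfl

namespace IsOcc

variable {k m n : ℕ} {s : Perm (Fin k)}

lemma eq {a : ℕ → Bool} {t : Perm (Fin k)} {f : Fin k → Fin k} (h : IsOcc a s t f) : s = t := by
  obtain ⟨hf, horder, -⟩ := h
  rw [hf.eq_id] at horder
  exact Perm.eq_of_lt_iff_lt horder

lemma of_comp {a : ℕ → Bool} {t : Perm (Fin m)} {u : Perm (Fin n)} {f : Fin k → Fin m}
    {g : Fin m → Fin n} (hg : StrictMono g) (hgorder : ∀ i j, t i < t j ↔ u (g i) < u (g j))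
    (h : IsOcc a s u (g ∘ f)) : IsOcc a s t f := by
  obtain ⟨hgf, horder, hadj⟩ := h
  have hf : StrictMono f := fun _ _ hij => hg.lt_iff_lt.1 (hgf hij)
  exact ⟨hf, fun i j => (horder i j).trans (hgorder _ _).symm, fun i hi ha =>
    Fin.val_eq_val_add_one_of_strictMono hg (hf (Fin.mk_lt_mk.2 i.lt_succ_self)) (hadj i hi ha)⟩

lemma comp_qa {t : Perm (Fin m)} {u : Perm (Fin n)} {f : Fin k → Fin m} {g : Fin m → Fin n}
    (hf : IsOcc qa s t f) (hg : IsOcc qa t u g) : IsOcc qa s u (g ∘ f) := by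
  rw [isOcc_qa_iff] at hf hg ⊢
  obtain ⟨hfmono, hforder, hfadj⟩ := hf
  obtain ⟨hgmono, hgorder, hgadj⟩ := hg
  refine ⟨hgmono.comp hfmono, fun i j => (hforder i j).trans (hgorder _ _), ?_⟩
  intro x y hx hy
  have hfx : (x : ℕ) ≤ f x := Fin.val_le_val_apply_of_strictMono hfmono x
  exact hgadj (f x) (f y) (by omega) (hfadj x y hx hy)

lemma val_apply_add_qa {t : Perm (Fin n)} {f : Fin k → Fin n} (h : IsOcc qa s t f)
    {x y : Fin k} (hx : (x : ℕ) ≠ 0) (hxy : x ≤ y) : (f y : ℕ) + x = f x + y := by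
  obtain ⟨-, -, hadj⟩ := isOcc_qa_iff.1 h
  obtain ⟨d, hd⟩ := Nat.exists_eq_add_of_le (Fin.le_def.1 hxy)
  induction d generalizing y with
  | zero => rw [Fin.ext (hd.trans x.val.add_zero)]
  | succ d ih =>
    have hprev := ih (y := ⟨x + d, by omega⟩) (Fin.le_def.2 (by simp)) rfl
    have hstep := hadj ⟨x + d, by omega⟩ y (by simp; omega) (by simp; omega)
    simp only at hprev
    omega

lemma exists_notMem_range_qa {t : Perm (Fin (n + 1))} {f : Fin k → Fin (n + 1)}
    (h : IsOcc qa s t f) (hk : k < n + 1) :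
    ∃ p : Fin (n + 1), ((p : ℕ) ≤ 1 ∨ p = Fin.last n) ∧ ∀ j, f j ≠ p := by
  by_contra! hall
  have hmono : StrictMono f := h.1
  obtain ⟨j₀, hj₀⟩ := hall 0 (Or.inl (by simp))
  have hk0 : 0 < k := j₀.pos
  have hf0 : f ⟨0, hk0⟩ = 0 := by
    have hle := hmono.monotone (Fin.le_def.2 (Nat.zero_le j₀) : (⟨0, hk0⟩ : Fin k) ≤ j₀)
    rw [hj₀] at hle
    exact nonpos_iff_eq_zero.1 hle
  obtain ⟨j₁, hj₁⟩ := hall ⟨1, by omega⟩ (Or.inl le_rfl)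
  have hj₁0 : (j₁ : ℕ) ≠ 0 := fun hj => by
    rw [show j₁ = ⟨0, hk0⟩ from Fin.ext hj, hf0] at hj₁
    simp [Fin.ext_iff] at hj₁
  obtain ⟨jₗ, hjₗ⟩ := hall (Fin.last n) (Or.inr rfl)
  have hjₗ0 : (jₗ : ℕ) ≠ 0 := fun hj => by
    rw [show jₗ = ⟨0, hk0⟩ from Fin.ext hj, hf0] at hjₗ
    simp [Fin.ext_iff] at hjₗ
    omega
  have hj₁le : (j₁ : ℕ) ≤ 1 := by
    simpa [hj₁] using Fin.val_le_val_apply_of_strictMono hmono j₁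
  have hspan := h.val_apply_add_qa hj₁0 (Fin.le_def.2 (show (j₁ : ℕ) ≤ jₗ by omega))
  rw [hj₁, hjₗ] at hspan
  simp only [Fin.val_last] at hspan
  omega

end IsOcc

/-- The permutation order-isomorphic to `t` with its entry at position `p` deleted. -/
def Equiv.Perm.eraseAt {m : ℕ} (t : Perm (Fin (m + 1))) (p : Fin (m + 1)) : Perm (Fin m) :=
  ((finSuccAboveOrderIso p).toEquiv.trans
      (t.subtypeEquiv fun _ => t.injective.ne_iff.symm)).trans
    (finSuccAboveOrderIso (t p)).symm.toEquiv

lemma Equiv.Perm.eraseAt_lt_eraseAt_iff {m : ℕ} (t : Perm (Fin (m + 1))) (p : Fin (m + 1))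
    (i j : Fin m) : t.eraseAt p i < t.eraseAt p j ↔ t (p.succAbove i) < t (p.succAbove j) :=
  (finSuccAboveOrderIso (t p)).symm.lt_iff_lt.trans Subtype.mk_lt_mk

lemma isOcc_eraseAt_succAbove {m : ℕ} (t : Perm (Fin (m + 1))) {p : Fin (m + 1)}
    (hp : (p : ℕ) ≤ 1 ∨ p = Fin.last m) : IsOcc qa (t.eraseAt p) t p.succAbove := by
  refine isOcc_qa_iff.2 ⟨Fin.strictMono_succAbove p, t.eraseAt_lt_eraseAt_iff p, ?_⟩
  intro x y hx hy
  rcases hp with hp | rfl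
  · rw [Fin.succAbove_of_le_castSucc _ _ (Fin.le_def.2 (by simp; omega)),
      Fin.succAbove_of_le_castSucc _ _ (Fin.le_def.2 (by simp; omega))]
    simp [hy]
  · simp [hy]

lemma qCov_eraseAt {m : ℕ} (t : Perm (Fin (m + 1))) {p : Fin (m + 1)}
    (hp : (p : ℕ) ≤ 1 ∨ p = Fin.last m) : QCov ⟨m, t.eraseAt p⟩ ⟨m + 1, t⟩ :=
  ⟨rfl, _, isOcc_eraseAt_succAbove t hp⟩

lemma qOcc_trans {ρ σ τ : QPerm} : QOcc ρ σ → QOcc σ τ → QOcc ρ τ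
  | ⟨f, hf⟩, ⟨g, hg⟩ => ⟨g ∘ f, hf.comp_qa hg⟩

lemma QLe.qOcc {σ τ : QPerm} (h : QLe σ τ) : QOcc σ τ := by
  induction h with
  | refl => exact ⟨id, strictMono_id, fun _ _ => Iff.rfl, fun _ _ _ => rfl⟩
  | tail _ hcov ih => exact qOcc_trans ih hcov.2

lemma qLe_of_isOcc {k : ℕ} {s : Perm (Fin k)} :
    ∀ {n : ℕ} {t : Perm (Fin n)} {f : Fin k → Fin n}, IsOcc qa s t f → QLe ⟨k, s⟩ ⟨n, t⟩
  | n, t, f, h => by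
    rcases (Fin.le_of_injective f h.1.injective).eq_or_lt with rfl | hlt
    · exact h.eq ▸ .refl
    · obtain ⟨m, rfl⟩ : ∃ m, n = m + 1 := ⟨n - 1, by omega⟩
      obtain ⟨p, hp, hpf⟩ := h.exists_notMem_range_qa hlt
      choose f' hf' using fun j => Fin.exists_succAbove_eq (hpf j)
      have h' : IsOcc qa s (t.eraseAt p) f' :=
        IsOcc.of_comp (Fin.strictMono_succAbove p) (t.eraseAt_lt_eraseAt_iff p)
          (by rwa [show p.succAbove ∘ f' = f from funext hf'])
      exact (qLe_of_isOcc h').tail (qCov_eraseAt t hp)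

/-- For `a = (1,0,0,…)`: `σ ≤ τ` in the quasi-consecutive pattern poset iff
there is an occurrence of `σ` in `τ` all of whose entries are adjacent in
`τ` except possibly the first and the second. -/
theorem qle_iff_qocc (σ τ : QPerm) : QLe σ τ ↔ QOcc σ τ :=
  ⟨QLe.qOcc, fun ⟨_, h⟩ => qLe_of_isOcc h⟩
end

section
/- In the quasi-consecutive pattern poset, if σ ≤ τ, σ occurs precisely once in τ, and that occurrence involves exactly two of the three entries a_1, a_2, a_n of τ = a_1 a_2 ⋯ a_n, then the interval [σ, τ] is a chain; hence μ(σ, τ) = −1 if length(σ) = n − 1 and μ(σ, τ) = 0 if length(σ) < n − 1. -/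
open scoped Classical

/-!
Every `ρ ∈ [σ, τ]` has an occurrence `g` in `τ`, and composing it with an occurrence of `σ`
in `ρ` gives an occurrence of `σ` in `τ`, which must be the unique one `f`. A quasi-consecutive
occurrence is its first position followed by a block of adjacent positions, so it is fixed by
its first and last positions. Since `f`, hence `g`, involves two of the positions `0, 1, n - 1`
of `a₁, a₂, aₙ`, these two positions of `g` depend only on the length of `ρ`; so `ρ`, the
pattern of `τ` at the positions of `g`, is determined by its length, and `[σ, τ]` is a chain.
On a chain the Möbius function is `-1` on covers and `0` beyond.
-/

lemma Fin.val_le_val_apply_of_strictMono_s7 {m n : ℕ} {g : Fin m → Fin n} (hg : StrictMono g)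
    (i : Fin m) : (i : ℕ) ≤ g i := by
  obtain ⟨i, hi⟩ := i
  induction i with
  | zero => exact Nat.zero_le _
  | succ i ih =>
    exact (ih (by omega)).trans_lt (hg (show (⟨i, by omega⟩ : Fin m) < ⟨i + 1, hi⟩ by simp))

lemma Equiv.Perm.eq_of_lt_iff_lt_s7 {m : ℕ} {π₁ π₂ : Equiv.Perm (Fin m)}
    (h : ∀ i j, π₁ i < π₁ j ↔ π₂ i < π₂ j) : π₁ = π₂ := by
  have hmono : StrictMono (π₂ ∘ π₁.symm) := fun a b hab =>
    (h _ _).1 (by simpa using hab)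
  ext x
  simpa using congrArg Fin.val (hmono.apply_eq (x := π₁ x)).symm

lemma StrictMono.val_apply_zero_of_involves {m n : ℕ} {g : Fin (m + 1) → Fin n}
    (hg : StrictMono g) (h0 : Involves g 0) : (g 0 : ℕ) = 0 := by
  obtain ⟨y, hy⟩ := h0
  have : g 0 ≤ g y := hg.monotone (Fin.zero_le y)
  rw [Fin.le_def] at this
  omega

lemma StrictMono.val_apply_last_of_involves {m n : ℕ} {g : Fin (m + 1) → Fin n}
    (hg : StrictMono g) (hl : Involves g (n - 1)) : (g (Fin.last m) : ℕ) = n - 1 := by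
  obtain ⟨y, hy⟩ := hl
  have : g y ≤ g (Fin.last m) := hg.monotone (Fin.le_last y)
  rw [Fin.le_def] at this
  have := (g (Fin.last m)).isLt
  omega

lemma Involves.of_comp {k m n : ℕ} {g : Fin m → Fin n} {h : Fin k → Fin m} {i : ℕ}
    (hi : Involves (g ∘ h) i) : Involves g i :=
  let ⟨j, hj⟩ := hi; ⟨h j, hj⟩

section Occurrence

variable {k m n : ℕ} {σ : Equiv.Perm (Fin k)} {π : Equiv.Perm (Fin m)} {τ : Equiv.Perm (Fin n)}

lemma IsOcc.refl : IsOcc qa π π id :=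
  ⟨strictMono_id, fun _ _ => Iff.rfl, fun _ _ _ => rfl⟩

lemma IsOcc.val_apply_succ {g : Fin m → Fin n} (hg : IsOcc qa π τ g) {p q : Fin m}
    (hp : 1 ≤ (p : ℕ)) (hq : (q : ℕ) = p + 1) : (g q : ℕ) = g p + 1 := by
  obtain ⟨p, hpm⟩ := p
  obtain ⟨q, hqm⟩ := q
  simp only at hp hq
  subst hq
  exact hg.2.2 p hqm (by simp [qa]; omega)

lemma IsOcc.val_apply_eq_add {g : Fin m → Fin n} (hg : IsOcc qa π τ g) {i j : Fin m}
    (hi : 1 ≤ (i : ℕ)) (hij : i ≤ j) : (g j : ℕ) = g i + (j - i) := by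
  obtain ⟨j, hj⟩ := j
  induction j with
  | zero => simp [Fin.le_def] at hij; omega
  | succ j ih =>
    rcases eq_or_lt_of_le hij with rfl | hlt
    · simp
    · rw [Fin.lt_def] at hlt
      have := ih (by omega) (by rw [Fin.le_def]; simp only at hlt ⊢; omega)
      rw [hg.val_apply_succ (p := ⟨j, by omega⟩) (by simp only at hlt ⊢; omega) rfl]
      simp only at this hlt ⊢
      omega

lemma IsOcc.comp {h : Fin k → Fin m} {g : Fin m → Fin n} (hh : IsOcc qa σ π h)
    (hg : IsOcc qa π τ g) : IsOcc qa σ τ (g ∘ h) := by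
  refine ⟨hg.1.comp hh.1, fun i j => (hh.2.1 i j).trans (hg.2.1 _ _), fun i hi hqa => ?_⟩
  have hi1 : 1 ≤ i := by simp [qa] at hqa; omega
  exact hg.val_apply_succ (le_trans hi1 (Fin.val_le_val_apply_of_strictMono_s7 hh.1 ⟨i, by omega⟩))
    (hh.val_apply_succ hi1 rfl)

end Occurrence

section Endpoints

variable {m n : ℕ} {π π₁ π₂ : Equiv.Perm (Fin (m + 1))} {τ : Equiv.Perm (Fin n)}

lemma IsOcc.ext_of_endpoints {g₁ g₂ : Fin (m + 1) → Fin n} (hg₁ : IsOcc qa π₁ τ g₁)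
    (hg₂ : IsOcc qa π₂ τ g₂) (h0 : (g₁ 0 : ℕ) = g₂ 0)
    (hlast : (g₁ (Fin.last m) : ℕ) = g₂ (Fin.last m)) : g₁ = g₂ := by
  funext p
  rcases Fin.eq_zero_or_eq_succ p with rfl | ⟨p, rfl⟩
  · exact Fin.ext h0
  · have h₁ := hg₁.val_apply_eq_add (by simp) (Fin.le_last p.succ)
    have h₂ := hg₂.val_apply_eq_add (by simp) (Fin.le_last p.succ)
    exact Fin.ext (by omega)

lemma IsOcc.endpoints_of_involves_zero_one {g : Fin (m + 1) → Fin n} (hg : IsOcc qa π τ g)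
    (h0 : Involves g 0) (h1 : Involves g 1) :
    (g 0 : ℕ) = 0 ∧ (g (Fin.last m) : ℕ) = m := by
  have hg0 := hg.1.val_apply_zero_of_involves h0
  obtain ⟨y, hy⟩ := h1
  have hy1 : (y : ℕ) = 1 := by
    have := Fin.val_le_val_apply_of_strictMono_s7 hg.1 y
    have : y ≠ 0 := by rintro rfl; omega
    have := Fin.val_ne_of_ne this
    simp only [Fin.val_zero] at this
    omega
  have := hg.val_apply_eq_add hy1.ge (Fin.le_last y)
  exact ⟨hg0, by simp only [Fin.val_last] at this; omega⟩

/-- If `n = m + 1` the occurrence is the identity; otherwise `1` cannot lie in the block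
`g 1, …, g m = n - 1`, so it is `g 0`. -/
lemma IsOcc.endpoints_of_involves_one_last {g : Fin (m + 1) → Fin n} (hg : IsOcc qa π τ g)
    (h1 : Involves g 1) (hl : Involves g (n - 1)) :
    (g 0 : ℕ) = (if n = m + 1 then 0 else 1) ∧ (g (Fin.last m) : ℕ) = n - 1 := by
  have hglast := hg.1.val_apply_last_of_involves hl
  refine ⟨?_, hglast⟩
  split_ifs with hn
  · subst hn
    simpa using congrArg Fin.val (hg.1.apply_eq (x := 0))
  · obtain ⟨y, hy⟩ := h1
    rcases Fin.eq_zero_or_eq_succ y with rfl | ⟨y, rfl⟩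
    · exact hy
    · have := Fin.val_le_val_apply_of_strictMono_s7 hg.1 y.succ
      have := hg.val_apply_eq_add (by simp) (Fin.le_last y.succ)
      simp only [Fin.val_succ, Fin.val_last] at *
      omega

lemma IsOcc.eq_of_involves {k : ℕ} {f : Fin k → Fin n} {g₁ g₂ : Fin (m + 1) → Fin n}
    (hg₁ : IsOcc qa π₁ τ g₁) (hg₂ : IsOcc qa π₂ τ g₂)
    (hf₁ : ∀ i, Involves f i → Involves g₁ i) (hf₂ : ∀ i, Involves f i → Involves g₂ i)
    (hf : (Involves f 0 ∧ Involves f 1) ∨ (Involves f 0 ∧ Involves f (n - 1)) ∨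
      (Involves f 1 ∧ Involves f (n - 1))) : g₁ = g₂ := by
  obtain ⟨a, b, hab⟩ : ∃ a b : ℕ, ∀ {π : Equiv.Perm (Fin (m + 1))} {g : Fin (m + 1) → Fin n},
      IsOcc qa π τ g → (∀ i, Involves f i → Involves g i) →
        (g 0 : ℕ) = a ∧ (g (Fin.last m) : ℕ) = b := by
    rcases hf with ⟨h0, h1⟩ | ⟨h0, hl⟩ | ⟨h1, hl⟩
    · exact ⟨0, m, fun hg hfg => hg.endpoints_of_involves_zero_one (hfg _ h0) (hfg _ h1)⟩
    · exact ⟨0, n - 1, fun hg hfg => ⟨hg.1.val_apply_zero_of_involves (hfg _ h0),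
        hg.1.val_apply_last_of_involves (hfg _ hl)⟩⟩
    · exact ⟨_, n - 1, fun hg hfg => hg.endpoints_of_involves_one_last (hfg _ h1) (hfg _ hl)⟩
  obtain ⟨h₁0, h₁l⟩ := hab hg₁ hf₁
  obtain ⟨h₂0, h₂l⟩ := hab hg₂ hf₂
  exact hg₁.ext_of_endpoints hg₂ (h₁0.trans h₂0.symm) (h₁l.trans h₂l.symm)

end Endpoints

namespace QLe

variable {σ τ : QPerm}

lemma exists_isOcc (h : QLe σ τ) : ∃ f : Fin σ.1 → Fin τ.1, IsOcc qa σ.2 τ.2 f := by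
  induction h with
  | refl => exact ⟨id, IsOcc.refl⟩
  | tail _ hcov ih =>
    obtain ⟨f, hf⟩ := ih
    obtain ⟨g, hg⟩ := hcov.2
    exact ⟨g ∘ f, hf.comp hg⟩

lemma len_le (h : QLe σ τ) : σ.1 ≤ τ.1 := by
  induction h with
  | refl => exact le_rfl
  | tail _ hcov ih => have := hcov.1; omega

lemma eq_of_len_eq (h : QLe σ τ) (hlen : σ.1 = τ.1) : σ = τ := by
  rcases Relation.ReflTransGen.cases_head h with h | ⟨ρ, hcov, hρ⟩
  · exact h
  · have := hcov.1
    have := len_le hρ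
    omega

lemma exists_len_eq (h : QLe σ τ) {ℓ : ℕ} (h₁ : σ.1 ≤ ℓ) (h₂ : ℓ ≤ τ.1) :
    ∃ ρ, QLe σ ρ ∧ QLe ρ τ ∧ ρ.1 = ℓ := by
  induction h using Relation.ReflTransGen.head_induction_on with
  | refl => exact ⟨τ, .refl, .refl, by omega⟩
  | @head σ ρ hcov hρ ih =>
    rcases eq_or_lt_of_le h₁ with rfl | hlt
    · exact ⟨σ, .refl, .head hcov hρ, rfl⟩
    · obtain ⟨ρ', hρρ', hρ'τ, hlen⟩ := ih (by have := hcov.1; omega)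
      exact ⟨ρ', .head hcov hρρ', hρ'τ, hlen⟩

end QLe

lemma qChain_of_len_injOn {σ τ : QPerm}
    (h : ∀ ρ₁ ρ₂, ρ₁ ∈ QInterval σ τ → ρ₂ ∈ QInterval σ τ → ρ₁.1 = ρ₂.1 → ρ₁ = ρ₂) :
    QChain σ τ := by
  suffices key : ∀ ρ₁ ρ₂, ρ₁ ∈ QInterval σ τ → ρ₂ ∈ QInterval σ τ → ρ₁.1 ≤ ρ₂.1 → QLe ρ₁ ρ₂ by
    intro ρ₁ ρ₂ h₁ h₂
    rcases le_total ρ₁.1 ρ₂.1 with hl | hl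
    exacts [Or.inl (key _ _ h₁ h₂ hl), Or.inr (key _ _ h₂ h₁ hl)]
  intro ρ₁ ρ₂ h₁ h₂ hl
  obtain ⟨ρ, hσρ, hρρ₂, hlen⟩ := h₂.1.exists_len_eq h₁.1.len_le hl
  rwa [h ρ ρ₁ ⟨hσρ, hρρ₂.trans h₂.2⟩ h₁ hlen] at hρρ₂

lemma QChain.of_le_right {σ τ ρ : QPerm} (h : QChain σ τ) (hρ : QLe ρ τ) : QChain σ ρ :=
  fun ρ₁ ρ₂ h₁ h₂ => h ρ₁ ρ₂ ⟨h₁.1, h₁.2.trans hρ⟩ ⟨h₂.1, h₂.2.trans hρ⟩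

lemma QChain.eq_of_len_eq {σ τ ρ₁ ρ₂ : QPerm} (h : QChain σ τ) (h₁ : ρ₁ ∈ QInterval σ τ)
    (h₂ : ρ₂ ∈ QInterval σ τ) (hlen : ρ₁.1 = ρ₂.1) : ρ₁ = ρ₂ := by
  rcases h ρ₁ ρ₂ h₁ h₂ with h | h
  exacts [h.eq_of_len_eq hlen, (h.eq_of_len_eq hlen.symm).symm]

theorem qChain_of_unique_isOcc {σ τ : QPerm} {f : Fin σ.1 → Fin τ.1}
    (huniq : ∀ g : Fin σ.1 → Fin τ.1, IsOcc qa σ.2 τ.2 g → g = f)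
    (hf : (Involves f 0 ∧ Involves f 1) ∨ (Involves f 0 ∧ Involves f (τ.1 - 1)) ∨
      (Involves f 1 ∧ Involves f (τ.1 - 1))) : QChain σ τ := by
  refine qChain_of_len_injOn fun ρ₁ ρ₂ h₁ h₂ hlen => ?_
  obtain ⟨_ | m, π₁⟩ := ρ₁ <;> obtain ⟨m₂, π₂⟩ := ρ₂ <;> simp only at hlen <;> subst hlen
  · exact congrArg _ (Subsingleton.elim π₁ π₂)
  obtain ⟨e₁, he₁⟩ := h₁.1.exists_isOcc
  obtain ⟨g₁, hg₁⟩ := h₁.2.exists_isOcc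
  obtain ⟨e₂, he₂⟩ := h₂.1.exists_isOcc
  obtain ⟨g₂, hg₂⟩ := h₂.2.exists_isOcc
  have hfg₁ : ∀ i, Involves f i → Involves g₁ i := fun i hi =>
    Involves.of_comp (huniq _ (he₁.comp hg₁) ▸ hi)
  have hfg₂ : ∀ i, Involves f i → Involves g₂ i := fun i hi =>
    Involves.of_comp (huniq _ (he₂.comp hg₂) ▸ hi)
  obtain rfl : g₁ = g₂ := hg₁.eq_of_involves hg₂ hfg₁ hfg₂ hf
  exact congrArg _ (Equiv.Perm.eq_of_lt_iff_lt_s7 fun i j => (hg₁.2.1 i j).trans (hg₂.2.1 i j).symm)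

noncomputable def qIco (σ τ : QPerm) : Finset QPerm :=
  (permsUpTo τ.1).filter fun z => QLe σ z ∧ QLe z τ ∧ z ≠ τ

lemma mem_qIco {σ τ ρ : QPerm} : ρ ∈ qIco σ τ ↔ QLe σ ρ ∧ QLe ρ τ ∧ ρ ≠ τ := by
  simp only [qIco, Finset.mem_filter, permsUpTo, Finset.mem_sigma, Finset.mem_range,
    Finset.mem_univ, and_true, and_iff_right_iff_imp]
  exact fun h => Nat.lt_succ_of_le h.2.1.len_le

lemma qMuAux_succ {m : ℕ} {σ τ : QPerm} (hne : σ ≠ τ) :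
    qMuAux (m + 1) σ τ = -∑ z ∈ qIco σ τ, qMuAux m σ z := by
  simp only [qMuAux, if_neg hne, qIco]

lemma len_lt_of_mem_qIco {σ τ ρ : QPerm} (h : ρ ∈ qIco σ τ) : ρ.1 < τ.1 := by
  obtain ⟨-, hρτ, hne⟩ := mem_qIco.1 h
  exact lt_of_le_of_ne hρτ.len_le fun hlen => hne (hρτ.eq_of_len_eq hlen)

lemma qMuAux_succ_of_len_le {m : ℕ} {σ τ : QPerm} (h : τ.1 ≤ m) :
    qMuAux (m + 1) σ τ = qMuAux m σ τ := by
  induction m generalizing τ with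
  | zero =>
    by_cases hne : σ = τ
    · simp [qMuAux, hne]
    · have hempty : ∀ z ∈ qIco σ τ, qMuAux 0 σ z = 0 := fun z hz =>
        absurd (len_lt_of_mem_qIco hz) (by omega)
      rw [qMuAux_succ hne, Finset.sum_eq_zero hempty]
      simp [qMuAux, hne]
  | succ m ih =>
    by_cases hne : σ = τ
    · simp [qMuAux, hne]
    · rw [qMuAux_succ hne, qMuAux_succ hne]
      exact congrArg _ <| Finset.sum_congr rfl fun z hz =>
        ih (by have := len_lt_of_mem_qIco hz; omega)

lemma qMuAux_eq_qMu {m : ℕ} {σ τ : QPerm} (h : τ.1 ≤ m) : qMuAux m σ τ = qMu σ τ := by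
  induction m, h using Nat.le_induction with
  | base => rfl
  | succ m _ ih => rw [qMuAux_succ_of_len_le (by omega), ih]

lemma qMu_self (σ : QPerm) : qMu σ σ = 1 := by
  unfold qMu qMuAux
  split <;> simp

lemma qMu_of_ne {σ τ : QPerm} (hne : σ ≠ τ) : qMu σ τ = -∑ z ∈ qIco σ τ, qMu σ z := by
  rw [← qMuAux_eq_qMu (Nat.le_succ τ.1), qMuAux_succ hne]
  exact congrArg _ (Finset.sum_congr rfl fun z hz => qMuAux_eq_qMu (len_lt_of_mem_qIco hz).le)

lemma qMu_eq_neg_one_of_len_succ {σ τ : QPerm} (hle : QLe σ τ) (hlen : σ.1 + 1 = τ.1) :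
    qMu σ τ = -1 := by
  have hne : σ ≠ τ := by rintro rfl; omega
  have hIco : qIco σ τ = {σ} := by
    ext z
    refine ⟨fun hz => ?_, fun hz => ?_⟩
    · have := len_lt_of_mem_qIco hz
      have hσz := (mem_qIco.1 hz).1
      exact Finset.mem_singleton.2 (hσz.eq_of_len_eq (by have := hσz.len_le; omega)).symm
    · rw [Finset.mem_singleton.1 hz]
      exact mem_qIco.2 ⟨.refl, hle, hne⟩
  rw [qMu_of_ne hne, hIco, Finset.sum_singleton, qMu_self]

/-- In a chain, `[σ, τ)` consists of `σ`, a single element of length `σ.1 + 1`, and longer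
elements with `μ = 0`, so the defining sum is `1 - 1 + 0`. -/
lemma qMu_eq_zero_of_qChain {σ τ : QPerm} (hle : QLe σ τ) (hc : QChain σ τ)
    (hlen : σ.1 + 2 ≤ τ.1) : qMu σ τ = 0 := by
  induction hn : τ.1 using Nat.strong_induction_on generalizing τ with
  | _ n ih =>
  obtain ⟨w, hσw, hwτ, hw⟩ := hle.exists_len_eq (ℓ := σ.1 + 1) (by omega) (by omega)
  have hne : σ ≠ w := by rintro rfl; omega
  have hval : ∀ z ∈ qIco σ τ,
      qMu σ z = (if z = σ then 1 else 0) + (if z = w then -1 else 0) := by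
    intro z hz
    obtain ⟨hσz, hzτ, -⟩ := mem_qIco.1 hz
    by_cases h₁ : z = σ
    · subst h₁
      simp [qMu_self, hne]
    by_cases h₂ : z = w
    · subst h₂
      simp [h₁, qMu_eq_neg_one_of_len_succ hσz hw.symm]
    have : z.1 ≠ σ.1 := fun h => h₁ (hσz.eq_of_len_eq h.symm).symm
    have : z.1 ≠ σ.1 + 1 := fun h => h₂ (hc.eq_of_len_eq ⟨hσz, hzτ⟩ ⟨hσw, hwτ⟩ (by omega))
    have := hσz.len_le
    simp [h₁, h₂, ih z.1 (hn ▸ len_lt_of_mem_qIco hz) hσz (hc.of_le_right hzτ) (by omega) rfl]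
  have hσ : σ ∈ qIco σ τ := mem_qIco.2 ⟨.refl, hle, by rintro rfl; omega⟩
  have hw : w ∈ qIco σ τ := mem_qIco.2 ⟨hσw, hwτ, by rintro rfl; omega⟩
  rw [qMu_of_ne (by rintro rfl; omega), Finset.sum_congr rfl hval, Finset.sum_add_distrib,
    Finset.sum_ite_eq', Finset.sum_ite_eq', if_pos hσ, if_pos hw]
  norm_num

theorem unique_occurrence_two_of_three_general (σ τ : QPerm) (hle : QLe σ τ)
    (f : Fin σ.1 → Fin τ.1)
    (huniq : ∀ g : Fin σ.1 → Fin τ.1, IsOcc qa σ.2 τ.2 g → g = f)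
    (h2 : (Involves f 0 ∧ Involves f 1 ∧ ¬ Involves f (τ.1 - 1)) ∨
          (Involves f 0 ∧ ¬ Involves f 1 ∧ Involves f (τ.1 - 1)) ∨
          (¬ Involves f 0 ∧ Involves f 1 ∧ Involves f (τ.1 - 1))) :
    QChain σ τ ∧ (σ.1 + 1 = τ.1 → qMu σ τ = -1) ∧
      (σ.1 + 1 < τ.1 → qMu σ τ = 0) := by
  have hchain : QChain σ τ := qChain_of_unique_isOcc huniq <|
    h2.imp (fun h => ⟨h.1, h.2.1⟩) (Or.imp (fun h => ⟨h.1, h.2.2⟩) fun h => h.2)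
  exact ⟨hchain, qMu_eq_neg_one_of_len_succ hle, fun hlt => qMu_eq_zero_of_qChain hle hchain hlt⟩

/-- If `σ` occurs precisely once in `τ = a₁a₂⋯aₙ` and the unique occurrence
involves exactly two of the three entries `a₁, a₂, aₙ`, then `[σ, τ]` is a
chain; hence `μ(σ,τ) = -1` if `σ` has length `n - 1` and `μ(σ,τ) = 0` if
`σ` has length `< n - 1`. -/
theorem unique_occurrence_two_of_three (σ τ : QPerm) (hle : QLe σ τ)
    (f : Fin σ.1 → Fin τ.1) (hf : IsOcc qa σ.2 τ.2 f)
    (huniq : ∀ g : Fin σ.1 → Fin τ.1, IsOcc qa σ.2 τ.2 g → g = f)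
    (h2 : (Involves f 0 ∧ Involves f 1 ∧ ¬ Involves f (τ.1 - 1)) ∨
          (Involves f 0 ∧ ¬ Involves f 1 ∧ Involves f (τ.1 - 1)) ∨
          (¬ Involves f 0 ∧ Involves f 1 ∧ Involves f (τ.1 - 1))) :
    QChain σ τ ∧ (σ.1 + 1 = τ.1 → qMu σ τ = -1) ∧
      (σ.1 + 1 < τ.1 → qMu σ τ = 0) :=
  unique_occurrence_two_of_three_general σ τ hle f huniq h2
end
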